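/- For any sequence A[0..n−1] over alphabet [σ] and any index j with 0 ≤ j ≤ n−1, with τ = j mod σ, t = ⌊j/σ⌋, and c = A[j], the partial rank satisfies rank'(A, j) = select_0(B_c, t) − (t−1) + P_τ[t], where B_c is the chunked unary bitvector for symbol c (as above, with chunk length σ) and P_τ[t] = rank'(A_t, τ) is the partial rank of position τ within chunk A_t. -/

import Mathlib

/-!
The zeros of `B_c` close the chunks: the `t`-th zero sits right after the ones of chunks
`0, …, t - 1`, so `select₀(B_c, t) - (t - 1)` counts the occurrences of `c` in the first `t`
chunks, i.e. in `A[0, tσ)`. Splitting `A[0..j]` at `tσ` leaves exactly `A_t[0..τ]`.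
-/

/-- Indices of the `0`-bits of a bitvector (`false` = 0-bit, `true` = 1-bit). -/
def zeroIndices (l : List Bool) : List ℕ :=
  (List.range l.length).filter (fun i => l.getD i true = false)

/-- `select0 l t`: the (0-based) index of the `t`-th `0`-bit of `l`
(`t` counted 1-based), with the convention `select0 l 0 = 0`. -/
def select0 (l : List Bool) (t : ℕ) : ℕ :=
  if t = 0 then 0 else (zeroIndices l).getD (t - 1) 0

/-- Number of occurrences of symbol `c` in the `k`-th chunk (of length `σ`) of `A`. -/
def chunkOcc (A : ℕ → ℕ) (σ c k : ℕ) : ℕ :=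
  ((List.range σ).filter (fun i => A (k * σ + i) = c)).length

/-- The bitvector `B_c = 1^{m₀} 0 1^{m₁} 0 ⋯ 1^{m_{nchunks-1}} 0`, where `m_k`
is the number of occurrences of `c` in chunk `k` of `A`. -/
def bvec (A : ℕ → ℕ) (σ c nchunks : ℕ) : List Bool :=
  (List.range nchunks).flatMap
    (fun k => List.replicate (chunkOcc A σ c k) true ++ [false])

open Finset

lemma length_filter_range_add (p : ℕ → Bool) (a b : ℕ) :
    ((List.range (a + b)).filter p).length
      = ((List.range a).filter p).length + ((List.range b).filter (fun i => p (a + i))).length := by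
  rw [List.range_add, List.filter_append, List.length_append, List.filter_map, List.length_map]
  rfl

lemma length_filter_range_mul_eq_sum_chunkOcc (A : ℕ → ℕ) (σ c t : ℕ) :
    ((List.range (t * σ)).filter (fun i => A i = c)).length
      = ∑ k ∈ range t, chunkOcc A σ c k := by
  induction t with
  | zero => simp
  | succ t ih =>
    rw [Nat.succ_mul, length_filter_range_add, ih, sum_range_succ]
    rfl

lemma zeroIndices_append (l₁ l₂ : List Bool) :
    zeroIndices (l₁ ++ l₂) = zeroIndices l₁ ++ (zeroIndices l₂).map (l₁.length + ·) := by
  unfold zeroIndices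
  rw [List.length_append, List.range_add, List.filter_append, List.filter_map]
  congr 1
  · apply List.filter_congr
    intro i hi
    rw [List.getD_append _ _ _ _ (List.mem_range.mp hi)]
  · congr 1
    apply List.filter_congr
    intro i _
    simp only [Function.comp]
    rw [List.getD_append_right _ _ _ _ (Nat.le_add_right _ _), Nat.add_sub_cancel_left]

lemma zeroIndices_replicate_true_append_false (m : ℕ) :
    zeroIndices (List.replicate m true ++ [false]) = [m] := by
  have h_ones : zeroIndices (List.replicate m true) = [] := by
    rw [zeroIndices, List.filter_eq_nil_iff]
    intro i hi
    simp_all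
  rw [zeroIndices_append, h_ones, show zeroIndices [false] = [0] by decide]
  simp

lemma length_bvec (A : ℕ → ℕ) (σ c N : ℕ) :
    (bvec A σ c N).length = ∑ k ∈ range N, chunkOcc A σ c k + N := by
  induction N with
  | zero => simp [bvec]
  | succ N ih =>
    rw [bvec, List.range_succ, List.flatMap_append, List.length_append, ← bvec, ih,
      sum_range_succ]
    simp only [List.flatMap_cons, List.flatMap_nil, List.append_nil, List.length_append,
      List.length_replicate, List.length_singleton]
    ring

lemma zeroIndices_bvec (A : ℕ → ℕ) (σ c N : ℕ) :
    zeroIndices (bvec A σ c N)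
      = (List.range N).map (fun t => ∑ k ∈ range (t + 1), chunkOcc A σ c k + t) := by
  induction N with
  | zero => simp [bvec, zeroIndices]
  | succ N ih =>
    rw [bvec, List.range_succ, List.flatMap_append, ← bvec, zeroIndices_append, ih]
    simp only [List.flatMap_cons, List.flatMap_nil, List.append_nil,
      zeroIndices_replicate_true_append_false, List.map_append]
    simp only [sum_range_succ, length_bvec, List.map_cons, List.map_nil,
      List.append_cancel_left_eq, List.cons.injEq, and_true]
    ring

lemma select0_bvec_sub (A : ℕ → ℕ) {σ c N t : ℕ} (ht : t ≤ N) :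
    select0 (bvec A σ c N) t - (t - 1) = ∑ k ∈ range t, chunkOcc A σ c k := by
  cases t with
  | zero => simp [select0]
  | succ s =>
    rw [select0, if_neg (Nat.succ_ne_zero s), zeroIndices_bvec,
      List.getD_eq_getElem _ _ (by simpa using ht)]
    simp

theorem stmt3_general (σ n : ℕ) (A : ℕ → ℕ)
    (j : ℕ) (hj : j < n) :
    ((List.range (j + 1)).filter (fun i => A i = A j)).length
      = select0 (bvec A σ (A j) (n / σ)) (j / σ) - (j / σ - 1)
        + ((List.range (j % σ + 1)).filter
            (fun i => A (j / σ * σ + i) = A j)).length := by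
  have hsplit : j + 1 = j / σ * σ + (j % σ + 1) := by
    rw [← add_assoc, Nat.div_add_mod']
  rw [hsplit, length_filter_range_add, length_filter_range_mul_eq_sum_chunkOcc,
    select0_bvec_sub A (Nat.div_le_div_right hj.le)]

/-- Partial rank identity: for a sequence `A[0..n-1]` over `[σ]` divided into
chunks of length `σ` (with `σ ∣ n`) and any position `j < n`, with
`t = ⌊j/σ⌋`, `τ = j mod σ`, `c = A j`, the partial rank (number of occurrences
of `A j` in `A[0..j]`) satisfies
`rank'(A, j) = select₀(B_c, t) − (t − 1) + P_τ[t]`,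
where `P_τ[t] = rank'(A_t, τ)` is the partial rank within chunk `t`. -/
theorem stmt3 (σ n : ℕ) (hσ : 0 < σ) (hdvd : σ ∣ n) (A : ℕ → ℕ)
    (j : ℕ) (hj : j < n) :
    ((List.range (j + 1)).filter (fun i => A i = A j)).length
      = select0 (bvec A σ (A j) (n / σ)) (j / σ) - (j / σ - 1)
        + ((List.range (j % σ + 1)).filter
            (fun i => A (j / σ * σ + i) = A j)).length :=
  stmt3_general σ n A j hj
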